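/- Let W be a finite type and let G be a simple graph on W. Let C4 be the 4-cycle on Fin 4 (i is adjacent to j if and only if j = i + 1 mod 4 or i = j + 1 mod 4), let D1 be C4 with the additional edge {0,2}, let D2 be C4 with the additional edge {1,3}, and let K4 be the complete graph on Fin 4. Then |M_E(C4,G)| = |M_V(C4,G)| + |M_V(D1,G)| + |M_V(D2,G)| + |M_V(K4,G)|. (Labeled form of the equation morphing the edge-induced 4-cycle into the vertex-induced 4-cycle, the vertex-induced chordal 4-cycle, and the 4-clique.) -/

import Mathlib

/-- The set of edge-induced matches of pattern `p` in data graph `G`: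
injective maps preserving adjacency. -/
def EdgeInduced {V W : Type*} (p : SimpleGraph V) (G : SimpleGraph W) : Set (V → W) :=
  {m | Function.Injective m ∧ ∀ u v, p.Adj u v → G.Adj (m u) (m v)}

/-- The set of vertex-induced matches of pattern `p` in data graph `G`:
injective maps reflecting adjacency exactly. -/
def VertexInduced {V W : Type*} (p : SimpleGraph V) (G : SimpleGraph W) : Set (V → W) :=
  {m | Function.Injective m ∧ ∀ u v, p.Adj u v ↔ G.Adj (m u) (m v)}

/-- The set `Φ(p,q)` of subgraph isomorphisms from `p` to `q`:
permutations of the vertex set mapping edges of `p` to edges of `q`. -/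
def SubIso {V : Type*} (p q : SimpleGraph V) : Set (Equiv.Perm V) :=
  {f | ∀ u v, p.Adj u v → q.Adj (f u) (f v)}

/-- `M ∘ F = { m ∘ f | m ∈ M, f ∈ F }`. -/
def CompSet {V W : Type*} (M : Set (V → W)) (F : Set (Equiv.Perm V)) : Set (V → W) :=
  {x | ∃ m ∈ M, ∃ f ∈ F, x = m ∘ f}

/-- The set `Aut(q)` of automorphisms of `q`. -/
def AutSet {V : Type*} (q : SimpleGraph V) : Set (Equiv.Perm V) :=
  {g | ∀ u v, q.Adj u v ↔ q.Adj (g u) (g v)}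

/-- The 4-cycle on `Fin 4`: `i` is adjacent to `j` iff `j = i + 1` or `i = j + 1` (mod 4). -/
def C4 : SimpleGraph (Fin 4) where
  Adj i j := j = i + 1 ∨ i = j + 1
  symm := by
    constructor
    intro i j h
    tauto
  loopless := by
    constructor
    intro i h
    rcases h with h | h <;> exact absurd h.symm (by omega)

/-- The chordal 4-cycle obtained from `C4` by adding the edge `{0, 2}`. -/
def D1 : SimpleGraph (Fin 4) := C4 ⊔ SimpleGraph.fromEdgeSet {s(0, 2)}

/-- The chordal 4-cycle obtained from `C4` by adding the edge `{1, 3}`. -/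
def D2 : SimpleGraph (Fin 4) := C4 ⊔ SimpleGraph.fromEdgeSet {s(1, 3)}

/-!
An injective `m : V → W` pulls `G` back to the graph `G.comap m` on `V`: `m` is an edge-induced
match of `p` iff `p ≤ G.comap m`, and a vertex-induced match of `q` iff `G.comap m = q`. Sorting
edge-induced matches of `p` by their pulled-back graph therefore counts them as the sum of the
vertex-induced match counts of the supergraphs of `p`. A supergraph of `C4` on `Fin 4` is
determined by which of the two chords `{0, 2}`, `{1, 3}` it contains, so these are exactly
`C4`, `D1`, `D2` and `K4`.
-/

open Function

section Matches

variable {V W : Type*} {p q : SimpleGraph V} {G : SimpleGraph W} {m : V → W}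

theorem mem_edgeInduced_iff : m ∈ EdgeInduced p G ↔ Injective m ∧ p ≤ G.comap m :=
  Iff.rfl

theorem mem_vertexInduced_iff : m ∈ VertexInduced q G ↔ Injective m ∧ G.comap m = q := by
  simp only [VertexInduced, Set.mem_ofPred_eq, SimpleGraph.ext_iff, funext_iff,
    SimpleGraph.comap_adj, eq_iff_iff, iff_comm]

theorem edgeInduced_eq_biUnion (p : SimpleGraph V) (G : SimpleGraph W) :
    EdgeInduced p G = ⋃ q ∈ {q | p ≤ q}, VertexInduced q G := by
  ext m
  simp [mem_edgeInduced_iff, mem_vertexInduced_iff]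

theorem pairwiseDisjoint_vertexInduced (G : SimpleGraph W) (s : Set (SimpleGraph V)) :
    s.PairwiseDisjoint (VertexInduced · G) := by
  intro q _ r _ hqr
  refine Set.disjoint_left.2 fun m hq hr => hqr ?_
  rw [← (mem_vertexInduced_iff.1 hq).2, (mem_vertexInduced_iff.1 hr).2]

theorem ncard_edgeInduced_eq_sum [Finite V] [Finite W] (G : SimpleGraph W)
    (S : Finset (SimpleGraph V)) (hS : ∀ q, q ∈ S ↔ p ≤ q) :
    (EdgeInduced p G).ncard = ∑ q ∈ S, (VertexInduced q G).ncard := by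
  have hS' : {q | p ≤ q} = (S : Set (SimpleGraph V)) := by ext q; simp [hS]
  rw [edgeInduced_eq_biUnion, hS', S.finite_toSet.ncard_biUnion (fun _ _ => Set.toFinite _)
    (pairwiseDisjoint_vertexInduced G _), finsum_mem_coe_finset]

end Matches

theorem eq_of_fourCycle_le {q r : SimpleGraph (Fin 4)} (hq : C4 ≤ q) (hr : C4 ≤ r)
    (h02 : q.Adj 0 2 ↔ r.Adj 0 2) (h13 : q.Adj 1 3 ↔ r.Adj 1 3) : q = r := by
  have hC : ∀ {u v}, C4.Adj u v → (q.Adj u v ↔ r.Adj u v) := fun h => iff_of_true (hq h) (hr h)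
  ext u v
  fin_cases u <;> fin_cases v
  all_goals first
    | exact iff_of_false q.irrefl r.irrefl
    | exact hC (Or.inl rfl)
    | exact hC (Or.inr rfl)
    | assumption
    | exact q.adj_comm _ _ |>.trans <| h02.trans <| r.adj_comm _ _
    | exact q.adj_comm _ _ |>.trans <| h13.trans <| r.adj_comm _ _

theorem fourCycle_le_iff {q : SimpleGraph (Fin 4)} : C4 ≤ q ↔ q ∈ [C4, D1, D2, ⊤] := by
  refine ⟨fun hq => ?_, ?_⟩
  · have hD1 : C4 ≤ D1 := le_sup_left
    have hD2 : C4 ≤ D2 := le_sup_left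
    by_cases h02 : q.Adj 0 2 <;> by_cases h13 : q.Adj 1 3
    · simp [eq_of_fourCycle_le hq le_top (by simpa) (by simpa)]
    · simp [eq_of_fourCycle_le hq hD1 (by simpa [D1]) (by simpa [D1, C4])]
    · simp [eq_of_fourCycle_le hq hD2 (by simpa [D2, C4]) (by simpa [D2])]
    · simp [eq_of_fourCycle_le hq le_rfl (by simpa [C4]) (by simpa [C4])]
  · simp only [List.mem_cons, List.not_mem_nil, or_false]
    rintro (rfl | rfl | rfl | rfl)
    exacts [le_rfl, le_sup_left, le_sup_left, le_top]

theorem fourCycle_supergraphs_nodup : [C4, D1, D2, ⊤].Nodup := by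
  have h02 := fun {q r : SimpleGraph (Fin 4)} (h : q = r) => congrArg (SimpleGraph.Adj · 0 2) h
  have h13 := fun {q r : SimpleGraph (Fin 4)} (h : q = r) => congrArg (SimpleGraph.Adj · 1 3) h
  simp only [List.nodup_cons, List.mem_cons, List.not_mem_nil, or_false, not_or]
  refine ⟨⟨?_, ?_, ?_⟩, ⟨?_, ?_⟩, ?_, ?_⟩
  all_goals first
    | exact fun h => by simpa [C4, D1, D2] using h02 h
    | exact fun h => by simpa [C4, D1, D2] using h13 h
    | simp

/-- Morphing equation for the edge-induced 4-cycle: its match count is the sum of the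
vertex-induced match counts of the 4-cycle, the two chordal 4-cycles, and the 4-clique. -/
theorem edgeInduced_fourCycle_count {W : Type*} [Fintype W] (G : SimpleGraph W) :
    (EdgeInduced C4 G).ncard =
      (VertexInduced C4 G).ncard + (VertexInduced D1 G).ncard +
        (VertexInduced D2 G).ncard + (VertexInduced (⊤ : SimpleGraph (Fin 4)) G).ncard := by
  classical
  rw [ncard_edgeInduced_eq_sum G _ fun q => List.mem_toFinset.trans fourCycle_le_iff.symm,
    List.sum_toFinset _ fourCycle_supergraphs_nodup]
  simp only [List.map_cons, List.map_nil, List.sum_cons, List.sum_nil]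
  ring
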